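/- Greedy near-optimality for weakly submodular set functions: let U : 2^T → ℝ≥0 be a set function with U(∅) = 0, nondecreasing, and satisfying the weak submodularity condition U(A ∪ {k}) − U(A) ≥ U(A ∪ {j} ∪ {k}) − U(A ∪ {j}) − ε for all A ⊆ T with |A| ≤ 2b and all j, k. Then the greedy algorithm choosing b elements one at a time (each maximizing the marginal gain) outputs a set G with U(G) ≥ (1 − (1 − 1/b)^b)(U(O) − b²ε) ≥ (1 − 1/e)·U(O) − b²ε, where O is any optimal set of size at most b. -/
import Mathlib


/-- Greedy near-optimality for weakly submodular, nondecreasing, nonnegative set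
functions: the greedy batch of size `b` achieves at least
`(1 − (1 − 1/b)^b)(U(O) − b²ε) ≥ (1 − 1/e)U(O) − b²ε`. -/
theorem stmt16 {ι : Type*} [DecidableEq ι] [Fintype ι]
    (U : Finset ι → ℝ) (b : ℕ) (hb : 1 ≤ b) (ε : ℝ) (hε : 0 ≤ ε)
    (hU0 : U ∅ = 0) (hUnn : ∀ A, 0 ≤ U A)
    (hmono : ∀ A B : Finset ι, A ⊆ B → U A ≤ U B)
    (hws : ∀ A : Finset ι, A.card ≤ 2 * b → ∀ j k : ι,
      U (insert k (insert j A)) - U (insert j A) - ε ≤ U (insert k A) - U A)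
    (G : ℕ → Finset ι) (hG0 : G 0 = ∅)
    (hGstep : ∀ i, ∃ g : ι, G (i + 1) = insert g (G i) ∧
      ∀ k : ι, U (insert k (G i)) ≤ U (insert g (G i)))
    (O : Finset ι) (hO : O.card ≤ b) :
    (1 - (1 - 1 / (b : ℝ)) ^ b) * (U O - (b : ℝ) ^ 2 * ε) ≤ U (G b) ∧
    (1 - 1 / Real.exp 1) * U O - (b : ℝ) ^ 2 * ε ≤ U (G b) := by
  have hb' : (1:ℝ) ≤ (b:ℝ) := by exact_mod_cast hb
  have hbpos : (0:ℝ) < (b:ℝ) := by linarith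
  have hGcard : ∀ i, (G i).card ≤ i := by
    intro i; induction i with
    | zero => simp [hG0]
    | succ i ih =>
      obtain ⟨g, hg, -⟩ := hGstep i
      rw [hg]
      have := Finset.card_insert_le g (G i)
      omega
  have hGmono : ∀ i, G i ⊆ G (i+1) := by
    intro i; obtain ⟨g, hg, -⟩ := hGstep i; rw [hg]; exact Finset.subset_insert _ _
  -- Lemma 1: removing a set S from the conditioning costs at most |S| * ε
  have lem1 : ∀ S A : Finset ι, (A ∪ S).card ≤ 2 * b → ∀ k : ι,
      U (insert k (A ∪ S)) - U (A ∪ S) ≤ U (insert k A) - U A + S.card * ε := by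
    intro S
    induction S using Finset.induction with
    | empty => intro A h k; simp
    | @insert j S' hj ih =>
      intro A h k
      have hsub : A ∪ S' ⊆ A ∪ insert j S' :=
        Finset.union_subset_union_right (Finset.subset_insert _ _)
      have hcard : (A ∪ S').card ≤ 2 * b :=
        le_trans (Finset.card_le_card hsub) h
      have h1 := hws (A ∪ S') hcard j k
      have h2 := ih A hcard k
      rw [Finset.union_insert]
      have hc : ((insert j S').card : ℝ) = (S'.card : ℝ) + 1 := by
        rw [Finset.card_insert_of_notMem hj]; push_cast; ring
      rw [hc]
      linarith
  -- Lemma 2: telescoping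
  have lem2 : ∀ S A : Finset ι, (A ∪ S).card ≤ 2 * b →
      U (A ∪ S) - U A ≤ (∑ k ∈ S, (U (insert k A) - U A)) + (S.card : ℝ)^2 * ε := by
    intro S
    induction S using Finset.induction with
    | empty => intro A h; simp
    | @insert j S' hj ih =>
      intro A h
      have hsub : A ∪ S' ⊆ A ∪ insert j S' :=
        Finset.union_subset_union_right (Finset.subset_insert _ _)
      have hcard : (A ∪ S').card ≤ 2 * b :=
        le_trans (Finset.card_le_card hsub) h
      have h1 := lem1 S' A hcard j
      have h2 := ih A hcard
      rw [Finset.union_insert, Finset.sum_insert hj]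
      have hc : ((insert j S').card : ℝ) = (S'.card : ℝ) + 1 := by
        rw [Finset.card_insert_of_notMem hj]; push_cast; ring
      rw [hc]
      have hS'nn : (0:ℝ) ≤ (S'.card : ℝ) := Nat.cast_nonneg _
      nlinarith
  -- Main step inequality
  have step : ∀ i, i < b →
      U O - (b:ℝ)^2 * ε - U (G (i+1)) ≤ (1 - 1/(b:ℝ)) * (U O - (b:ℝ)^2 * ε - U (G i)) := by
    intro i hi
    obtain ⟨g, hg, hmax⟩ := hGstep i
    have hcard : (G i ∪ O).card ≤ 2 * b := by
      have h1 := Finset.card_union_le (G i) O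
      have h2 := hGcard i
      omega
    have h2 := lem2 O (G i) hcard
    have hΔnn : 0 ≤ U (G (i+1)) - U (G i) := sub_nonneg.2 (hmono _ _ (hGmono i))
    have hsum : ∑ k ∈ O, (U (insert k (G i)) - U (G i)) ≤ (O.card : ℝ) * (U (G (i+1)) - U (G i)) := by
      calc ∑ k ∈ O, (U (insert k (G i)) - U (G i))
          ≤ ∑ _k ∈ O, (U (G (i+1)) - U (G i)) :=
            Finset.sum_le_sum (fun k _ => by rw [hg]; linarith [hmax k])
        _ = (O.card : ℝ) * (U (G (i+1)) - U (G i)) := by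
            rw [Finset.sum_const, nsmul_eq_mul]
    have hOb : (O.card : ℝ) ≤ (b:ℝ) := by exact_mod_cast hO
    have hOnn : (0:ℝ) ≤ (O.card : ℝ) := Nat.cast_nonneg _
    have hUO : U O ≤ U (G i ∪ O) := hmono _ _ Finset.subset_union_right
    have hεO : ((O.card : ℝ))^2 * ε ≤ (b:ℝ)^2 * ε :=
      mul_le_mul_of_nonneg_right (by nlinarith) hε
    have key : U O - U (G i) ≤ (b:ℝ) * (U (G (i+1)) - U (G i)) + (b:ℝ)^2 * ε := by
      nlinarith
    have h3 : (U O - (b:ℝ)^2 * ε - U (G i)) / (b:ℝ) ≤ U (G (i+1)) - U (G i) :=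
      (div_le_iff₀ hbpos).2 (by linarith)
    have hexpand : (1 - 1/(b:ℝ)) * (U O - (b:ℝ)^2 * ε - U (G i)) =
        (U O - (b:ℝ)^2 * ε - U (G i)) - (U O - (b:ℝ)^2 * ε - U (G i)) / (b:ℝ) := by
      ring
    rw [hexpand]
    linarith
  have hq : (0:ℝ) ≤ 1 - 1/(b:ℝ) := by
    have : 1/(b:ℝ) ≤ 1 := by rw [div_le_one hbpos]; exact hb'
    linarith
  have main : ∀ i, i ≤ b →
      U O - (b:ℝ)^2 * ε - U (G i) ≤ (1 - 1/(b:ℝ))^i * (U O - (b:ℝ)^2 * ε) := by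
    intro i
    induction i with
    | zero => intro _; simp [hG0, hU0]
    | succ i ih =>
      intro hib
      have h1 := step i (by omega)
      have h2 := ih (by omega)
      calc U O - (b:ℝ)^2 * ε - U (G (i+1))
          ≤ (1 - 1/(b:ℝ)) * (U O - (b:ℝ)^2 * ε - U (G i)) := h1
        _ ≤ (1 - 1/(b:ℝ)) * ((1 - 1/(b:ℝ))^i * (U O - (b:ℝ)^2 * ε)) :=
            mul_le_mul_of_nonneg_left h2 hq
        _ = (1 - 1/(b:ℝ))^(i+1) * (U O - (b:ℝ)^2 * ε) := by ring
  have hmb := main b le_rfl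
  set c : ℝ := (1 - 1/(b:ℝ))^b with hc
  have first : (1 - c) * (U O - (b:ℝ)^2 * ε) ≤ U (G b) := by nlinarith
  refine ⟨first, ?_⟩
  have hc0 : 0 ≤ c := pow_nonneg hq b
  have hcle : c ≤ 1 / Real.exp 1 := by
    have h1 : 1 - 1/(b:ℝ) ≤ Real.exp (-(1/(b:ℝ))) := by
      have := Real.add_one_le_exp (-(1/(b:ℝ)))
      linarith
    have h2 : c ≤ (Real.exp (-(1/(b:ℝ))))^b := pow_le_pow_left₀ hq h1 b
    have h3 : (Real.exp (-(1/(b:ℝ))))^b = Real.exp ((b:ℝ) * (-(1/(b:ℝ)))) := by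
      rw [← Real.exp_nat_mul]
    have h4 : (b:ℝ) * (-(1/(b:ℝ))) = -1 := by field_simp
    rw [h3, h4, Real.exp_neg] at h2
    rw [one_div]; exact h2
  have hεnn : 0 ≤ (b:ℝ)^2 * ε := by positivity
  have hUOnn := hUnn O
  have he : 0 < Real.exp 1 := Real.exp_pos 1
  have hie : 0 < 1 / Real.exp 1 := by positivity
  nlinarith [first]
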